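/- Let 𝒩 ≥ 1 be an integer, λ ∈ ℝ, and let m_1,…,m_𝒩 be nonzero real numbers. On the open set {X ∈ ℝ^𝒩 : X_1 < X_2 < ⋯ < X_𝒩} define Ψ_0(X) = ∏_{j=1}^𝒩 e^{−m_j X_j²/2} · ∏_{1≤j<k≤𝒩} (X_k − X_j)^{λ m_j m_k}, and the differential operator ℋ = Σ_{j=1}^𝒩 (−(1/m_j) ∂_{X_j}² + m_j X_j²) + Σ_{1≤j<k≤𝒩} λ (m_j + m_k)(λ m_j m_k − 1)/(X_j − X_k)². Then ℋ Ψ_0 = ℰ_0 Ψ_0 on this set, where ℰ_0 = λ (Σ_{j=1}^𝒩 m_j)² + Σ_{j=1}^𝒩 (1 − λ m_j²). -/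

import Mathlib

/-- Partial derivative in the `j`-th coordinate of a function on `ℝ^𝒩`. -/
noncomputable def pd {N : ℕ} (j : Fin N) (f : (Fin N → ℝ) → ℝ) : (Fin N → ℝ) → ℝ :=
  fun x => deriv (fun t => f (Function.update x j t)) (x j)

/-- The generalized Calogero operator `ℋ` with masses `m` and coupling `lam`. -/
noncomputable def calH1 (N : ℕ) (lam : ℝ) (m : Fin N → ℝ) (f : (Fin N → ℝ) → ℝ) :
    (Fin N → ℝ) → ℝ :=
  fun X => (∑ j, (-(1/(m j)) * pd j (pd j f) X + m j * (X j)^2 * f X)) +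
    ∑ j, ∑ k, (if j < k then
      lam * (m j + m k) * (lam * m j * m k - 1) / (X j - X k)^2 * f X else 0)

/-- The function `Ψ₀`. -/
noncomputable def Psi1 (N : ℕ) (lam : ℝ) (m : Fin N → ℝ) (X : Fin N → ℝ) : ℝ :=
  (∏ j, Real.exp (-(m j) * (X j)^2 / 2)) *
  ∏ j, ∏ k, (if j < k then (X k - X j) ^ (lam * m j * m k) else 1)

open Finset Real

namespace CalAux

variable {N : ℕ}
def U (N : ℕ) : Set (Fin N → ℝ) := {X | ∀ j k : Fin N, j < k → X j < X k}

noncomputable def F1 (N : ℕ) (lam : ℝ) (m : Fin N → ℝ) (X : Fin N → ℝ) : ℝ :=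
  (∑ j, (-(m j) * (X j)^2 / 2)) +
  ∑ j, ∑ k, (if j < k then lam * m j * m k * Real.log (X k - X j) else 0)

lemma Psi1_eq_exp (lam : ℝ) (m : Fin N → ℝ) {X : Fin N → ℝ} (hX : X ∈ U N) :
    Psi1 N lam m X = Real.exp (F1 N lam m X) := by
  unfold Psi1 F1
  rw [Real.exp_add, Real.exp_sum]
  congr 1
  rw [Real.exp_sum]
  refine Finset.prod_congr rfl fun j _ => ?_
  rw [Real.exp_sum]
  refine Finset.prod_congr rfl fun k _ => ?_
  by_cases h : j < k
  · simp only [h, if_true]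
    rw [Real.rpow_def_of_pos (sub_pos.2 (hX j k h)), mul_comm]
  · simp [h]

lemma isOpen_U : IsOpen (U N) := by
  have : U N = ⋂ (j : Fin N), ⋂ (k : Fin N), {X : Fin N → ℝ | j < k → X j < X k} := by
    ext X; simp [U, Set.mem_iInter]
  rw [this]
  refine isOpen_iInter_of_finite fun j => isOpen_iInter_of_finite fun k => ?_
  by_cases h : j < k
  · simp only [h, forall_true_left]
    exact isOpen_lt (continuous_apply j) (continuous_apply k)
  · simp [h]

lemma continuous_upd (X : Fin N → ℝ) (j : Fin N) :
    Continuous (fun t : ℝ => Function.update X j t) := by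
  refine continuous_pi fun i => ?_
  by_cases h : i = j
  · simpa [Function.update_apply, h] using continuous_id'
  · simpa [Function.update_apply, h] using (continuous_const : Continuous fun _ : ℝ => X i)

lemma upd_mem_nhds {X : Fin N → ℝ} (hX : X ∈ U N) (j : Fin N) :
    {t : ℝ | Function.update X j t ∈ U N} ∈ nhds (X j) := by
  have h1 : IsOpen {t : ℝ | Function.update X j t ∈ U N} :=
    isOpen_U.preimage (continuous_upd X j)
  exact h1.mem_nhds (by simpa [Function.update_eq_self] using hX)

noncomputable def Ssum (m : Fin N → ℝ) (j : Fin N) (X : Fin N → ℝ) : ℝ :=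
  ∑ k ∈ univ.erase j, m k / (X j - X k)

lemma hasDerivAt_F1 (lam : ℝ) (m : Fin N → ℝ) (j : Fin N) {X : Fin N → ℝ} (hX : X ∈ U N) :
    HasDerivAt (fun t => F1 N lam m (Function.update X j t))
      (m j * (lam * Ssum m j X - X j)) (X j) := by
  have h1 : HasDerivAt (fun t => ∑ i, (-(m i) * (Function.update X j t i)^2 / 2))
      (∑ i, if i = j then -(m j) * X j else 0) (X j) := by
    refine HasDerivAt.fun_sum fun i _ => ?_
    by_cases h : i = j
    · have heq : (fun t : ℝ => -(m i) * (Function.update X j t i)^2 / 2)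
          = fun t : ℝ => -(m j) * t^2 / 2 := by
        funext t; rw [h, Function.update_self]
      rw [heq, if_pos h]
      have h0 := ((hasDerivAt_pow 2 (X j)).const_mul (-(m j))).div_const 2
      refine h0.congr_deriv ?_
      ring
    · have heq : (fun t : ℝ => -(m i) * (Function.update X j t i)^2 / 2)
          = fun _ : ℝ => -(m i) * (X i)^2 / 2 := by
        funext t; rw [Function.update_of_ne h]
      rw [heq, if_neg h]
      exact hasDerivAt_const _ _
  have h2 : HasDerivAt (fun t => ∑ i, ∑ k,
        (if i < k then lam * m i * m k * Real.log (Function.update X j t k - Function.update X j t i) else 0))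
      (∑ i, ∑ k, (if i < k then
        (if i = j then lam * m i * m k / (X j - X k)
         else if k = j then lam * m i * m k / (X j - X i) else 0) else 0)) (X j) := by
    refine HasDerivAt.fun_sum fun i _ => HasDerivAt.fun_sum fun k _ => ?_
    by_cases hik : i < k
    · by_cases hi : i = j
      · have hjk : j < k := hi ▸ hik
        have hkj : k ≠ j := fun h => absurd (h ▸ hjk) (lt_irrefl _)
        have hpos : X k - X j ≠ 0 := sub_ne_zero.2 (ne_of_gt (hX j k hjk))
        have heq : (fun t : ℝ => if i < k then lam * m i * m k *
              Real.log (Function.update X j t k - Function.update X j t i) else 0)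
            = fun t : ℝ => lam * m i * m k * Real.log (X k - t) := by
          funext t
          rw [if_pos hik, Function.update_of_ne hkj, hi, Function.update_self]
        rw [heq, if_pos hik, if_pos hi]
        have hd : HasDerivAt (fun t : ℝ => X k - t) (0 - 1) (X j) :=
          (hasDerivAt_const _ _).sub (hasDerivAt_id _)
        have hlog := (hd.log hpos).const_mul (lam * m i * m k)
        refine hlog.congr_deriv ?_
        have hpos' : X j - X k ≠ 0 := sub_ne_zero.2 (ne_of_lt (hX j k hjk))
        field_simp
        ring
      · by_cases hk : k = j
        · have hij : i < j := hk ▸ hik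
          have hpos : X j - X i ≠ 0 := sub_ne_zero.2 (ne_of_gt (hX i j hij))
          have heq : (fun t : ℝ => if i < k then lam * m i * m k *
                Real.log (Function.update X j t k - Function.update X j t i) else 0)
              = fun t : ℝ => lam * m i * m k * Real.log (t - X i) := by
            funext t
            rw [if_pos hik, Function.update_of_ne hi, hk, Function.update_self]
          rw [heq, if_pos hik, if_neg hi, if_pos hk]
          have hd : HasDerivAt (fun t : ℝ => t - X i) 1 (X j) :=
            (hasDerivAt_id _).sub_const _
          have hlog := (hd.log hpos).const_mul (lam * m i * m k)
          refine hlog.congr_deriv ?_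
          rw [mul_one_div]
        · have heq : (fun t : ℝ => if i < k then lam * m i * m k *
                Real.log (Function.update X j t k - Function.update X j t i) else 0)
              = fun _ : ℝ => lam * m i * m k * Real.log (X k - X i) := by
            funext t
            rw [if_pos hik, Function.update_of_ne hk, Function.update_of_ne hi]
          rw [heq, if_pos hik, if_neg hi, if_neg hk]
          exact hasDerivAt_const _ _
    · have heq : (fun t : ℝ => if i < k then lam * m i * m k *
            Real.log (Function.update X j t k - Function.update X j t i) else 0)
          = fun _ : ℝ => (0 : ℝ) := by
        funext t; rw [if_neg hik]
      rw [heq, if_neg hik]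
      exact hasDerivAt_const _ _
  have h := h1.add h2
  have heq : (fun t => F1 N lam m (Function.update X j t))
      = fun t => (∑ i, (-(m i) * (Function.update X j t i)^2 / 2)) +
        ∑ i, ∑ k, (if i < k then lam * m i * m k * Real.log (Function.update X j t k - Function.update X j t i) else 0) := by
    funext t; rfl
  rw [heq]
  refine h.congr_deriv ?_
  have e1 : (∑ i : Fin N, if i = j then -(m j) * X j else 0) = -(m j) * X j := by simp
  have ptw : ∀ i k : Fin N, (if i < k then
        (if i = j then lam * m i * m k / (X j - X k)
         else if k = j then lam * m i * m k / (X j - X i) else 0) else 0)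
      = (if i = j then (if j < k then lam * m j * (m k / (X j - X k)) else 0) else 0)
        + (if k = j then (if i < j then lam * m j * (m i / (X j - X i)) else 0) else 0) := by
    intro i k
    by_cases hik : i < k
    · by_cases hi : i = j
      · have hjk : j < k := hi ▸ hik
        have hkj : ¬ k = j := fun h => absurd (h ▸ hjk) (lt_irrefl _)
        rw [if_pos hik, if_pos hi, if_pos hi, if_pos hjk, if_neg hkj, add_zero, hi,
          mul_div_assoc]
      · by_cases hk : k = j
        · have hij : i < j := hk ▸ hik
          rw [if_pos hik, if_neg hi, if_pos hk, if_neg hi, if_pos hk, if_pos hij, zero_add,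
            hk, mul_div_assoc]
          ring
        · rw [if_pos hik, if_neg hi, if_neg hk, if_neg hi, if_neg hk, add_zero]
    · have hi : ¬ i = j ∨ ¬ (j < k) := by
        by_cases hi : i = j
        · exact Or.inr (fun h => hik (hi ▸ h))
        · exact Or.inl hi
      have hk : ¬ k = j ∨ ¬ (i < j) := by
        by_cases hk : k = j
        · exact Or.inr (fun h => hik (hk ▸ h))
        · exact Or.inl hk
      rw [if_neg hik]
      rcases hi with hi | hi <;> rcases hk with hk | hk <;>
        simp [hi, hk]
  have e2 : (∑ i : Fin N, ∑ k : Fin N, (if i < k then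
        (if i = j then lam * m i * m k / (X j - X k)
         else if k = j then lam * m i * m k / (X j - X i) else 0) else 0))
      = lam * m j * Ssum m j X := by
    simp_rw [ptw, Finset.sum_add_distrib]
    have eA : (∑ i : Fin N, ∑ k : Fin N, if i = j then (if j < k then lam * m j * (m k / (X j - X k)) else 0) else 0)
        = ∑ k : Fin N, if j < k then lam * m j * (m k / (X j - X k)) else 0 := by
      rw [Finset.sum_comm]
      refine Finset.sum_congr rfl fun k _ => ?_
      simp
    have eB : (∑ i : Fin N, ∑ k : Fin N, if k = j then (if i < j then lam * m j * (m i / (X j - X i)) else 0) else 0)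
        = ∑ i : Fin N, if i < j then lam * m j * (m i / (X j - X i)) else 0 := by
      refine Finset.sum_congr rfl fun i _ => ?_
      simp
    rw [eA, eB]
    have comb : ∀ k : Fin N, (if j < k then lam * m j * (m k / (X j - X k)) else 0)
        + (if k < j then lam * m j * (m k / (X j - X k)) else 0)
        = if k ≠ j then lam * m j * (m k / (X j - X k)) else 0 := by
      intro k
      rcases lt_trichotomy j k with h | h | h
      · simp [h, not_lt_of_gt h, ne_of_gt h]
      · simp [h.symm, lt_irrefl]
      · simp [h, not_lt_of_gt h, (ne_of_lt h)]
    calc (∑ k : Fin N, if j < k then lam * m j * (m k / (X j - X k)) else 0)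
          + (∑ i : Fin N, if i < j then lam * m j * (m i / (X j - X i)) else 0)
        = ∑ k : Fin N, ((if j < k then lam * m j * (m k / (X j - X k)) else 0)
            + (if k < j then lam * m j * (m k / (X j - X k)) else 0)) := by
          rw [Finset.sum_add_distrib]
      _ = ∑ k : Fin N, if k ≠ j then lam * m j * (m k / (X j - X k)) else 0 := by
          exact Finset.sum_congr rfl fun k _ => comb k
      _ = ∑ k ∈ univ.erase j, lam * m j * (m k / (X j - X k)) := by
          rw [← Finset.filter_ne', Finset.sum_filter]
      _ = lam * m j * Ssum m j X := by
          rw [Ssum, Finset.mul_sum]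
  rw [e1, e2]
  ring

noncomputable def Tsum (m : Fin N → ℝ) (j : Fin N) (X : Fin N → ℝ) : ℝ :=
  ∑ k ∈ univ.erase j, m k / (X j - X k)^2

lemma hasDerivAt_Psi1 (lam : ℝ) (m : Fin N → ℝ) (j : Fin N) {X : Fin N → ℝ} (hX : X ∈ U N) :
    HasDerivAt (fun t => Psi1 N lam m (Function.update X j t))
      ((m j * (lam * Ssum m j X - X j)) * Psi1 N lam m X) (X j) := by
  have hF := hasDerivAt_F1 lam m j hX
  have hexp := hF.exp
  have heq : (fun t => Psi1 N lam m (Function.update X j t))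
      =ᶠ[nhds (X j)] fun t => Real.exp (F1 N lam m (Function.update X j t)) := by
    filter_upwards [upd_mem_nhds hX j] with t ht
    exact Psi1_eq_exp lam m ht
  have := hexp.congr_of_eventuallyEq heq
  refine this.congr_deriv ?_
  rw [Psi1_eq_exp lam m hX, Function.update_eq_self]
  ring

lemma pd_Psi1 (lam : ℝ) (m : Fin N → ℝ) (j : Fin N) {X : Fin N → ℝ} (hX : X ∈ U N) :
    pd j (Psi1 N lam m) X = (m j * (lam * Ssum m j X - X j)) * Psi1 N lam m X :=
  (hasDerivAt_Psi1 lam m j hX).deriv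

lemma pd_pd_Psi1 (lam : ℝ) (m : Fin N → ℝ) (j : Fin N) {X : Fin N → ℝ} (hX : X ∈ U N) :
    pd j (pd j (Psi1 N lam m)) X =
      (m j * (-lam * Tsum m j X - 1)) * Psi1 N lam m X +
      (m j * (lam * Ssum m j X - X j)) *
        ((m j * (lam * Ssum m j X - X j)) * Psi1 N lam m X) := by
  have hne : ∀ k : Fin N, k ∈ univ.erase j → X j - X k ≠ 0 := by
    intro k hk
    have hkj : k ≠ j := (Finset.mem_erase.1 hk).1
    rcases lt_trichotomy j k with h | h | h
    · exact sub_ne_zero.2 (ne_of_lt (hX j k h))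
    · exact absurd h.symm hkj
    · exact sub_ne_zero.2 (ne_of_gt (hX k j h))
  -- derivative of the factor  t ↦ m j * (lam * Ssum m j (update X j t) - t)
  have hfac : HasDerivAt (fun t => m j * (lam * (∑ k ∈ univ.erase j, m k / (t - X k)) - t))
      (m j * (lam * (∑ k ∈ univ.erase j, (0 * (X j - X k) - m k * 1) / (X j - X k)^2) - 1)) (X j) := by
    refine HasDerivAt.const_mul _ (HasDerivAt.sub ?_ (hasDerivAt_id _))
    refine HasDerivAt.const_mul _ (HasDerivAt.fun_sum fun k hk => ?_)
    exact (hasDerivAt_const _ _).div ((hasDerivAt_id _).sub_const _) (hne k hk)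
  have hPsi := hasDerivAt_Psi1 lam m j hX
  have hprod := hfac.mul hPsi
  have heq2 : (fun t => pd j (Psi1 N lam m) (Function.update X j t))
      =ᶠ[nhds (X j)] fun t => (m j * (lam * (∑ k ∈ univ.erase j, m k / (t - X k)) - t))
          * Psi1 N lam m (Function.update X j t) := by
    filter_upwards [upd_mem_nhds hX j] with t ht
    rw [pd_Psi1 lam m j ht]
    have e : Ssum m j (Function.update X j t) = ∑ k ∈ univ.erase j, m k / (t - X k) := by
      rw [Ssum]
      refine Finset.sum_congr rfl fun k hk => ?_
      rw [Function.update_self, Function.update_of_ne (Finset.mem_erase.1 hk).1]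
    rw [e, Function.update_self]
  have hD := hprod.congr_of_eventuallyEq heq2
  have : pd j (pd j (Psi1 N lam m)) X = deriv (fun t => pd j (Psi1 N lam m) (Function.update X j t)) (X j) := rfl
  rw [this, hD.deriv]
  have es : (∑ k ∈ univ.erase j, m k / (X j - X k)) = Ssum m j X := rfl
  have et : (∑ k ∈ univ.erase j, (0 * (X j - X k) - m k * 1) / (X j - X k)^2) = - Tsum m j X := by
    rw [Tsum]
    refine Eq.trans (Finset.sum_congr rfl fun k hk => ?_) (Finset.sum_neg_distrib _)
    ring
  rw [es, et, Function.update_eq_self]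
  ring

lemma pair_sum (f : Fin N → Fin N → ℝ) (hd : ∀ j, f j j = 0) :
    ∑ j, ∑ k, f j k = ∑ j, ∑ k, if j < k then f j k + f k j else 0 := by
  have h1 : ∀ j k : Fin N, f j k = (if j < k then f j k else 0) + (if k < j then f j k else 0) := by
    intro j k
    rcases lt_trichotomy j k with h | h | h
    · simp [h, not_lt_of_gt h]
    · subst h; simp [hd]
    · simp [h, not_lt_of_gt h]
  calc ∑ j, ∑ k, f j k
      = ∑ j, ∑ k, ((if j < k then f j k else 0) + (if k < j then f j k else 0)) := by
        simp_rw [← h1]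
    _ = (∑ j, ∑ k, if j < k then f j k else 0) + ∑ j, ∑ k, if k < j then f j k else 0 := by
        simp [Finset.sum_add_distrib]
    _ = (∑ j, ∑ k, if j < k then f j k else 0) + ∑ j, ∑ k, if j < k then f k j else 0 := by
        congr 1; exact Finset.sum_comm
    _ = ∑ j, ∑ k, if j < k then f j k + f k j else 0 := by
        rw [← Finset.sum_add_distrib]
        refine Finset.sum_congr rfl fun j _ => ?_
        rw [← Finset.sum_add_distrib]
        refine Finset.sum_congr rfl fun k _ => ?_
        by_cases h : j < k <;> simp [h]

lemma swap_inner (G : Fin N → Fin N → Fin N → ℝ) :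
    ∑ b, ∑ c, ∑ a, G b c a = ∑ a, ∑ b, ∑ c, G b c a := by
  calc ∑ b, ∑ c, ∑ a, G b c a = ∑ b, ∑ a, ∑ c, G b c a :=
        Finset.sum_congr rfl fun _ _ => Finset.sum_comm
    _ = ∑ a, ∑ b, ∑ c, G b c a := Finset.sum_comm

lemma triple_zero (F : Fin N → Fin N → Fin N → ℝ)
    (h : ∀ j k l, F j k l + F k l j + F l j k = 0) :
    ∑ j, ∑ k, ∑ l, F j k l = 0 := by
  have e1 : ∑ j : Fin N, ∑ k : Fin N, ∑ l : Fin N, F j k l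
      = ∑ j : Fin N, ∑ k : Fin N, ∑ l : Fin N, F k l j := swap_inner F
  have e2 : ∑ j : Fin N, ∑ k : Fin N, ∑ l : Fin N, F j k l
      = ∑ j : Fin N, ∑ k : Fin N, ∑ l : Fin N, F l j k := by
    rw [e1, swap_inner (fun b c a => F c a b)]
  have h3 : (3:ℝ) * ∑ j : Fin N, ∑ k : Fin N, ∑ l : Fin N, F j k l = 0 := by
    calc (3:ℝ) * ∑ j : Fin N, ∑ k : Fin N, ∑ l : Fin N, F j k l
        = (∑ j : Fin N, ∑ k : Fin N, ∑ l : Fin N, F j k l)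
          + ((∑ j : Fin N, ∑ k : Fin N, ∑ l : Fin N, F k l j)
          + (∑ j : Fin N, ∑ k : Fin N, ∑ l : Fin N, F l j k)) := by
          rw [← e1, ← e2]; ring
      _ = ∑ j : Fin N, ∑ k : Fin N, ∑ l : Fin N, (F j k l + (F k l j + F l j k)) := by
          simp [Finset.sum_add_distrib]
      _ = 0 := by
          have : ∀ j k l : Fin N, F j k l + (F k l j + F l j k) = 0 := by
            intro j k l; have := h j k l; linarith
          simp [this]
  linarith

noncomputable def Qf (lam : ℝ) (m X : Fin N → ℝ) (j k l : Fin N) : ℝ :=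
  lam^2 * m j * ((m k / (X j - X k)) * (m l / (X j - X l)))

noncomputable def Qf' (lam : ℝ) (m X : Fin N → ℝ) (j k l : Fin N) : ℝ :=
  if l = k then 0 else Qf lam m X j k l

lemma Qf_cyc (lam : ℝ) (m X : Fin N → ℝ) (hd : ∀ j k : Fin N, j ≠ k → X j - X k ≠ 0)
    (j k l : Fin N) :
    Qf' lam m X j k l + Qf' lam m X k l j + Qf' lam m X l j k = 0 := by
  by_cases hjk : j = k
  · subst hjk
    by_cases hjl : l = j
    · subst hjl; simp [Qf', Qf, sub_self]
    · simp [Qf', Qf, sub_self, hjl]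
  · by_cases hkl : k = l
    · subst hkl; simp [Qf', Qf, sub_self, hjk, Ne.symm hjk]
    · by_cases hjl : j = l
      · subst hjl; simp [Qf', Qf, sub_self, hjk, hkl]
      · rw [Qf', Qf', Qf', if_neg (fun h => hkl h.symm), if_neg hjl, if_neg (fun h => hjk h.symm)]
        rw [Qf, Qf, Qf]
        have d1 := hd j k hjk
        have d2 := hd j l hjl
        have d3 := hd k l hkl
        have d4 := hd k j (Ne.symm hjk)
        have d5 := hd l j (fun h => hjl h.symm)
        have d6 := hd l k (fun h => hkl h.symm)
        field_simp
        ring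

lemma sq_sum (m : Fin N → ℝ) :
    (∑ j, m j)^2 = ∑ j, (m j)^2 + ∑ j, ∑ k, (if j < k then 2*(m j)*(m k) else 0) := by
  have h0 : (∑ j, m j)^2 = ∑ j : Fin N, ∑ k : Fin N, m j * m k := by
    rw [pow_two, Finset.sum_mul_sum]
  have split : ∀ j : Fin N, (∑ k, m j * m k) = (m j)^2 + ∑ k, (if k = j then 0 else m j * m k) := by
    intro j
    rw [← Finset.add_sum_erase univ (fun k => m j * m k) (Finset.mem_univ j)]
    congr 1
    · ring
    · rw [← Finset.sum_erase univ (f := fun k => if k = j then 0 else m j * m k) (if_pos rfl)]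
      refine Finset.sum_congr rfl fun k hk => ?_
      rw [if_neg (Finset.mem_erase.1 hk).1]
  have hps := pair_sum (fun j k : Fin N => if k = j then 0 else m j * m k) (fun j => if_pos rfl)
  rw [h0]
  simp_rw [split]
  rw [Finset.sum_add_distrib, hps]
  congr 1
  refine Finset.sum_congr rfl fun j _ => Finset.sum_congr rfl fun k _ => ?_
  by_cases h : j < k
  · have h1 : ¬ (k = j) := ne_of_gt h
    have h2 : ¬ (j = k) := ne_of_lt h
    simp only [h, if_true, h1, h2, if_false]
    ring
  · simp only [h, if_false]

lemma scalar_id (lam : ℝ) (m X : Fin N → ℝ)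
    (hd : ∀ j k : Fin N, j ≠ k → X j - X k ≠ 0) :
    (∑ j, (lam * Tsum m j X + 1 + 2*lam*(m j)*(X j)*(Ssum m j X)
        - lam^2 * m j * (Ssum m j X)^2))
      + ∑ j, ∑ k, (if j < k then lam*(m j + m k)*(lam * m j * m k - 1)/(X j - X k)^2 else 0)
    = lam * (∑ j, m j)^2 + ∑ j, (1 - lam*(m j)^2) := by
  have hS : ∀ j, Ssum m j X = ∑ k, m k / (X j - X k) := by
    intro j; rw [Ssum]; exact Finset.sum_erase _ (by simp [sub_self])
  have hT : ∀ j, Tsum m j X = ∑ k, m k / (X j - X k)^2 := by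
    intro j; rw [Tsum]; exact Finset.sum_erase _ (by simp [sub_self])
  -- (a)
  have ea : (∑ j, lam * Tsum m j X)
      = ∑ j, ∑ k, (if j < k then lam * (m k / (X j - X k)^2) + lam * (m j / (X k - X j)^2) else 0) := by
    have := pair_sum (fun j k : Fin N => lam * (m k / (X j - X k)^2)) (fun j => by simp [sub_self])
    rw [← this]
    refine Finset.sum_congr rfl fun j _ => ?_
    rw [hT, Finset.mul_sum]
  -- (b)
  have eb : (∑ j, 2*lam*(m j)*(X j)*(Ssum m j X))
      = ∑ j, ∑ k, (if j < k then 2*lam*(m j)*(X j)*(m k / (X j - X k))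
          + 2*lam*(m k)*(X k)*(m j / (X k - X j)) else 0) := by
    have := pair_sum (fun j k : Fin N => 2*lam*(m j)*(X j)*(m k / (X j - X k)))
      (fun j => by simp [sub_self])
    rw [← this]
    refine Finset.sum_congr rfl fun j _ => ?_
    rw [hS, Finset.mul_sum]
  -- (c)
  have ecj : ∀ j, lam^2 * m j * (Ssum m j X)^2
      = (∑ k, Qf lam m X j k k) + ∑ k, ∑ l, Qf' lam m X j k l := by
    intro j
    have e0 : (Ssum m j X)^2 = (∑ k, m k / (X j - X k)) * (∑ k, m k / (X j - X k)) := by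
      rw [hS]; ring
    have e1 : lam^2 * m j * (Ssum m j X)^2 = ∑ k, ∑ l, Qf lam m X j k l := by
      rw [e0, Finset.sum_mul_sum, Finset.mul_sum]
      refine Finset.sum_congr rfl fun k _ => ?_
      rw [Finset.mul_sum]
      rfl
    rw [e1, ← Finset.sum_add_distrib]
    refine Finset.sum_congr rfl fun k _ => ?_
    have e2 : (∑ l, Qf lam m X j k l)
        = Qf lam m X j k k + ∑ l ∈ univ.erase k, Qf lam m X j k l :=
      (Finset.add_sum_erase univ _ (Finset.mem_univ k)).symm
    have e3 : (∑ l ∈ univ.erase k, Qf lam m X j k l) = ∑ l, Qf' lam m X j k l := by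
      rw [← Finset.sum_erase univ (f := fun l => Qf' lam m X j k l) (if_pos rfl)]
      exact Finset.sum_congr rfl fun l hl => (if_neg (Finset.mem_erase.1 hl).1).symm
    rw [e2, e3]
  have ec : (∑ j, lam^2 * m j * (Ssum m j X)^2)
      = ∑ j, ∑ k, (if j < k then Qf lam m X j k k + Qf lam m X k j j else 0) := by
    have htz : (∑ j : Fin N, ∑ k : Fin N, ∑ l : Fin N, Qf' lam m X j k l) = 0 :=
      triple_zero _ (Qf_cyc lam m X hd)
    have hpr := pair_sum (fun j k : Fin N => Qf lam m X j k k) (fun j => by simp [Qf, sub_self])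
    calc (∑ j, lam^2 * m j * (Ssum m j X)^2)
        = (∑ j, ∑ k, Qf lam m X j k k) + ∑ j : Fin N, ∑ k : Fin N, ∑ l : Fin N, Qf' lam m X j k l := by
          simp_rw [ecj]; rw [Finset.sum_add_distrib]
      _ = ∑ j, ∑ k, Qf lam m X j k k := by rw [htz, add_zero]
      _ = _ := hpr
  -- combine
  have lhs_split : (∑ j, (lam * Tsum m j X + 1 + 2*lam*(m j)*(X j)*(Ssum m j X)
        - lam^2 * m j * (Ssum m j X)^2))
      = (∑ j, lam * Tsum m j X) + (N : ℝ) + (∑ j, 2*lam*(m j)*(X j)*(Ssum m j X))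
        - (∑ j, lam^2 * m j * (Ssum m j X)^2) := by
    rw [Finset.sum_sub_distrib, Finset.sum_add_distrib, Finset.sum_add_distrib]
    simp
  have rhs_split : lam * (∑ j, m j)^2 + ∑ j, (1 - lam*(m j)^2)
      = (N : ℝ) + (∑ j, ∑ k, (if j < k then lam * (2*(m j)*(m k)) else 0)) := by
    rw [sq_sum, Finset.sum_sub_distrib]
    have h1 : (∑ _j : Fin N, (1:ℝ)) = (N : ℝ) := by simp
    have h2 : (∑ j, lam*(m j)^2) = lam * ∑ j, (m j)^2 := by rw [Finset.mul_sum]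
    have h3 : lam * (∑ j, ∑ k, (if j < k then 2*(m j)*(m k) else 0))
        = ∑ j, ∑ k, (if j < k then lam * (2*(m j)*(m k)) else 0) := by
      rw [Finset.mul_sum]
      refine Finset.sum_congr rfl fun j _ => ?_
      rw [Finset.mul_sum]
      refine Finset.sum_congr rfl fun k _ => ?_
      by_cases h : j < k <;> simp [h]
    rw [h1, h2]
    rw [mul_add, h3]
    ring
  rw [lhs_split, ea, eb, ec, rhs_split]
  have key : (∑ j, ∑ k, (if j < k then lam * (m k / (X j - X k)^2) + lam * (m j / (X k - X j)^2) else 0))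
      + (∑ j, ∑ k, (if j < k then 2*lam*(m j)*(X j)*(m k / (X j - X k))
          + 2*lam*(m k)*(X k)*(m j / (X k - X j)) else 0))
      - (∑ j, ∑ k, (if j < k then Qf lam m X j k k + Qf lam m X k j j else 0))
      + (∑ j, ∑ k, (if j < k then lam*(m j + m k)*(lam * m j * m k - 1)/(X j - X k)^2 else 0))
      = ∑ j, ∑ k, (if j < k then lam * (2*(m j)*(m k)) else 0) := by
    rw [← Finset.sum_add_distrib, ← Finset.sum_sub_distrib, ← Finset.sum_add_distrib]
    refine Finset.sum_congr rfl fun j _ => ?_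
    rw [← Finset.sum_add_distrib, ← Finset.sum_sub_distrib, ← Finset.sum_add_distrib]
    refine Finset.sum_congr rfl fun k _ => ?_
    by_cases h : j < k
    · simp only [if_pos h]
      have d1 : X j - X k ≠ 0 := hd j k (ne_of_lt h)
      have d2 : X k - X j ≠ 0 := hd k j (ne_of_gt h)
      rw [Qf, Qf]
      field_simp
      ring
    · simp only [if_neg h]; ring
  linarith [key]

lemma hX_ne' {X : Fin N → ℝ} (hX : X ∈ U N) : ∀ j k : Fin N, j ≠ k → X j - X k ≠ 0 := by
  intro j k h
  rcases lt_trichotomy j k with h' | h' | h'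
  · exact sub_ne_zero.2 (ne_of_lt (hX j k h'))
  · exact absurd h' h
  · exact sub_ne_zero.2 (ne_of_gt (hX k j h'))

end CalAux

open Finset CalAux in
theorem stmt_1 (N : ℕ) (hN : 1 ≤ N) (lam : ℝ) (m : Fin N → ℝ) (hm : ∀ j, m j ≠ 0) :
    ∀ X : Fin N → ℝ, (∀ j k : Fin N, j < k → X j < X k) →
      calH1 N lam m (Psi1 N lam m) X =
        (lam * (∑ j, m j)^2 + ∑ j, (1 - lam * (m j)^2)) * Psi1 N lam m X := by
  intro X hXlt
  have hX : X ∈ U N := hXlt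
  have hd := hX_ne' hX
  have e1 : ∀ j : Fin N, -(1/(m j)) * pd j (pd j (Psi1 N lam m)) X + m j * (X j)^2 * Psi1 N lam m X
      = (lam * Tsum m j X + 1 + 2*lam*(m j)*(X j)*(Ssum m j X)
          - lam^2 * m j * (Ssum m j X)^2) * Psi1 N lam m X := by
    intro j
    rw [pd_pd_Psi1 lam m j hX]
    field_simp [hm j]
    ring
  have e2 : ∀ j k : Fin N, (if j < k then
        lam * (m j + m k) * (lam * m j * m k - 1) / (X j - X k)^2 * Psi1 N lam m X else 0)
      = (if j < k then lam * (m j + m k) * (lam * m j * m k - 1) / (X j - X k)^2 else 0)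
          * Psi1 N lam m X := by
    intro j k
    by_cases h : j < k <;> simp [h]
  show (∑ j, (-(1/(m j)) * pd j (pd j (Psi1 N lam m)) X + m j * (X j)^2 * Psi1 N lam m X)) +
      (∑ j, ∑ k, (if j < k then
        lam * (m j + m k) * (lam * m j * m k - 1) / (X j - X k)^2 * Psi1 N lam m X else 0))
      = (lam * (∑ j, m j)^2 + ∑ j, (1 - lam * (m j)^2)) * Psi1 N lam m X
  calc (∑ j, (-(1/(m j)) * pd j (pd j (Psi1 N lam m)) X + m j * (X j)^2 * Psi1 N lam m X)) +
      (∑ j, ∑ k, (if j < k then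
        lam * (m j + m k) * (lam * m j * m k - 1) / (X j - X k)^2 * Psi1 N lam m X else 0))
      = ((∑ j, (lam * Tsum m j X + 1 + 2*lam*(m j)*(X j)*(Ssum m j X)
            - lam^2 * m j * (Ssum m j X)^2))
         + ∑ j, ∑ k, (if j < k then lam*(m j + m k)*(lam * m j * m k - 1)/(X j - X k)^2 else 0))
          * Psi1 N lam m X := by
        rw [add_mul, Finset.sum_mul]
        congr 1
        · exact Finset.sum_congr rfl fun j _ => e1 j
        · rw [Finset.sum_mul]
          refine Finset.sum_congr rfl fun j _ => ?_
          rw [Finset.sum_mul]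
          exact Finset.sum_congr rfl fun k _ => e2 j k
    _ = (lam * (∑ j, m j)^2 + ∑ j, (1 - lam * (m j)^2)) * Psi1 N lam m X := by
        rw [scalar_id lam m X hd]
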